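/- Let (X, ≠q) be a hereditary quantum set and S, T ∈ 𝒬(X). If S and T q-commute, then S and Tᶜ q-commute, i.e. if S ∩ (S ∩ T)ᶜ ⊆ (T ∩ (S ∩ T)ᶜ)ᶜ then S ∩ (S ∩ Tᶜ)ᶜ ⊆ (Tᶜ ∩ (S ∩ Tᶜ)ᶜ)ᶜ. -/
import Mathlib


/-- The q-complement of a subset `D` with respect to a relation `q`. -/
def qCompl {X : Type*} (q : X → X → Prop) (D : Set X) : Set X :=
  {y | ∀ z ∈ D, q y z}

/-- The collection of q-subsets of a quantum set. -/
def qSubsets {X : Type*} (q : X → X → Prop) : Set (Set X) :=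
  {S | S = qCompl q (qCompl q S)}

/-- A quantum set is hereditary if for every q-subset `T`, the q-subsets of `X`
contained in `T` are exactly the q-subsets of `T` for the restricted relation. -/
def Hereditary {X : Type*} (q : X → X → Prop) : Prop :=
  ∀ T ∈ qSubsets q, ∀ S : Set X,
    (S ∈ qSubsets q ∧ S ⊆ T) ↔ (S ⊆ T ∧ S = qCompl q (qCompl q S ∩ T) ∩ T)

section Aux

variable {X : Type*} (q : X → X → Prop)

lemma qCompl_anti {A B : Set X} (h : A ⊆ B) : qCompl q B ⊆ qCompl q A :=
  fun y hy z hz => hy z (h hz)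

lemma subset_qCompl_qCompl (hsymm : ∀ x y, q x y → q y x) (A : Set X) :
    A ⊆ qCompl q (qCompl q A) :=
  fun x hx z hz => hsymm z x (hz x hx)

lemma qCompl_mem_qSubsets (hsymm : ∀ x y, q x y → q y x) (A : Set X) :
    qCompl q A ∈ qSubsets q :=
  Set.Subset.antisymm (subset_qCompl_qCompl q hsymm _)
    (qCompl_anti q (subset_qCompl_qCompl q hsymm A))

lemma inter_mem_qSubsets (hsymm : ∀ x y, q x y → q y x) {A B : Set X}
    (hA : A ∈ qSubsets q) (hB : B ∈ qSubsets q) : A ∩ B ∈ qSubsets q := by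
  apply Set.Subset.antisymm (subset_qCompl_qCompl q hsymm _)
  intro x hx
  constructor
  · have : qCompl q (qCompl q (A ∩ B)) ⊆ qCompl q (qCompl q A) :=
      qCompl_anti q (qCompl_anti q Set.inter_subset_left)
    exact hA ▸ this hx
  · have : qCompl q (qCompl q (A ∩ B)) ⊆ qCompl q (qCompl q B) :=
      qCompl_anti q (qCompl_anti q Set.inter_subset_right)
    exact hB ▸ this hx

/-- The key consequence of hereditarity ("orthomodularity"): if `A ⊆ T` are
q-subsets then `Tᶜ = (T ∩ Aᶜ)ᶜ ∩ Aᶜ`. -/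
lemma qCompl_eq_of_subset (hsymm : ∀ x y, q x y → q y x) (hhered : Hereditary q)
    {A T : Set X} (hA : A ∈ qSubsets q) (hT : T ∈ qSubsets q) (hAT : A ⊆ T) :
    qCompl q T = qCompl q (T ∩ qCompl q A) ∩ qCompl q A := by
  have h := (hhered (qCompl q A) (qCompl_mem_qSubsets q hsymm A) (qCompl q T)).mp
    ⟨qCompl_mem_qSubsets q hsymm T, qCompl_anti q hAT⟩
  have h2 := h.2
  rw [← hT] at h2
  exact h2

end Aux

/-- In a hereditary quantum set, if two q-subsets `S` and `T` q-commute, then `S`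
and `Tᶜ` q-commute. -/
theorem qcommute_with_qCompl {X : Type*} (q : X → X → Prop)
    (hsymm : ∀ x y, q x y → q y x) (hne : ∀ x y, q x y → x ≠ y)
    (hhered : Hereditary q)
    (S T : Set X) (hS : S ∈ qSubsets q) (hT : T ∈ qSubsets q)
    (hcomm : S ∩ qCompl q (S ∩ T) ⊆ qCompl q (T ∩ qCompl q (S ∩ T))) :
    S ∩ qCompl q (S ∩ qCompl q T)
      ⊆ qCompl q (qCompl q T ∩ qCompl q (S ∩ qCompl q T)) := by
  have hM : S ∩ T ∈ qSubsets q := inter_mem_qSubsets q hsymm hS hT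
  -- (†1): Tᶜ = (T ∩ Mᶜ)ᶜ ∩ Mᶜ where M = S ∩ T
  have d1 : qCompl q T = qCompl q (T ∩ qCompl q (S ∩ T)) ∩ qCompl q (S ∩ T) :=
    qCompl_eq_of_subset q hsymm hhered hM hT Set.inter_subset_right
  -- Step A: S ∩ Mᶜ = S ∩ Tᶜ
  have stepA : S ∩ qCompl q (S ∩ T) = S ∩ qCompl q T := by
    apply Set.Subset.antisymm
    · intro x hx
      refine ⟨hx.1, ?_⟩
      rw [d1]
      exact ⟨hcomm hx, hx.2⟩
    · intro x hx
      exact ⟨hx.1, qCompl_anti q Set.inter_subset_right hx.2⟩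
  have hN : S ∩ qCompl q T ∈ qSubsets q :=
    inter_mem_qSubsets q hsymm hS (qCompl_mem_qSubsets q hsymm T)
  -- N ⊆ Mᶜ
  have hNM : S ∩ qCompl q T ⊆ qCompl q (S ∩ T) :=
    fun x hx => qCompl_anti q Set.inter_subset_right hx.2
  -- (†2) with T := Mᶜ, A := N :  M = (Mᶜ ∩ Nᶜ)ᶜ ∩ Nᶜ
  have d2 : qCompl q (qCompl q (S ∩ T)) =
      qCompl q (qCompl q (S ∩ T) ∩ qCompl q (S ∩ qCompl q T)) ∩
        qCompl q (S ∩ qCompl q T) :=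
    qCompl_eq_of_subset q hsymm hhered hN
      (qCompl_mem_qSubsets q hsymm (S ∩ T)) hNM
  rw [← hM] at d2
  -- (†3) with T := S, A := M :  Sᶜ = (S ∩ Mᶜ)ᶜ ∩ Mᶜ = Nᶜ ∩ Mᶜ
  have d3 : qCompl q S = qCompl q (S ∩ qCompl q (S ∩ T)) ∩ qCompl q (S ∩ T) :=
    qCompl_eq_of_subset q hsymm hhered hM hS Set.inter_subset_left
  rw [stepA] at d3
  -- Step B: S ∩ Nᶜ ⊆ M = S ∩ T
  have stepB : S ∩ qCompl q (S ∩ qCompl q T) ⊆ S ∩ T := by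
    intro x hx
    rw [d2]
    refine ⟨?_, hx.2⟩
    -- need x ∈ (Mᶜ ∩ Nᶜ)ᶜ; we have x ∈ S = Sᶜᶜ and Mᶜ ∩ Nᶜ ⊆ Sᶜ (by d3)
    intro z hz
    have hzS : z ∈ qCompl q S := by
      rw [d3]; exact ⟨hz.2, hz.1⟩
    have hxcc : x ∈ qCompl q (qCompl q S) := hS ▸ hx.1
    exact hxcc z hzS
  -- Final step
  intro x hx z hz
  have hxT : x ∈ T := (stepB hx).2
  have hxTcc : x ∈ qCompl q (qCompl q T) := hT ▸ hxT
  exact hxTcc z hz.1
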